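/- Suppose f : ℝ → ℝ is continuous and there exist θ > 2 and M > 0 such that 0 < θ·F(t) ≤ t·f(t) for all |t| ≥ M, where F(t) = ∫_0^t f(s) ds. Then for every θ̃ ∈ (2, θ) there exist M₁ > 0 and N₀ ∈ ℕ such that for all m ≥ N₀ and all |t| > M₁, 0 < θ̃·F_m(t) ≤ t·f_m(t), where f_m = ρ_m * f and F_m(t) = ∫_0^t f_m(s) ds. -/

import Mathlib

/-!
With `θ ≥ 1` the AR inequality makes `F s / s` nondecreasing for `|s| ≥ M`, so `F t → +∞`
as `|t| → ∞`. For `k = c ρ`, supported in `[-1, 1]` with integral one, the substitution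
`s = t - u / m` and Fubini give `f_m t = ∫ k u * f (t - u / m)` and
`F_m t = ∫ k u * (F (t - u / m) - F (-(u / m)))`, so it suffices to prove, uniformly in
`|v| ≤ 1`, that `θ̃ (F (t - v) - F (-v)) ≤ t f (t - v)` for `|t|` large. There `F (-v)` stays
bounded while `F (t - v)` is huge, and `t f (t - v) ≥ (1 - 1 / |t - v|) θ F (t - v)`; the gap
between `θ` and `θ̃` absorbs both errors.
-/

open MeasureTheory Set Filter

lemma tendsto_atTop_of_le_mul_deriv {F f : ℝ → ℝ} {M : ℝ} (hM : 0 < M)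
    (hF : ∀ s, HasDerivAt F (f s) s) (hFM : 0 < F M) (h : ∀ s, M ≤ s → F s ≤ s * f s) :
    Tendsto F atTop atTop := by
  have hmono : MonotoneOn (fun s => F s / s) (Ici M) := by
    refine monotoneOn_of_hasDerivWithinAt_nonneg
      (f' := fun s => (f s * s - F s * 1) / s ^ 2) (convex_Ici M)
      (fun s hs => ((hF s).continuousAt.div continuousAt_id
        (lt_of_lt_of_le hM hs).ne').continuousWithinAt) (fun s hs => ?_) (fun s hs => ?_)
    · rw [interior_Ici] at hs
      exact (((hF s).div (hasDerivAt_id s) (hM.trans hs).ne').hasDerivWithinAt)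
    · rw [interior_Ici] at hs
      have := h s hs.le
      simp only [mul_one]
      exact div_nonneg (by linarith) (sq_nonneg s)
  have hlin : ∀ s, M ≤ s → F M / M * s ≤ F s := fun s hs => by
    have := hmono self_mem_Ici hs hs
    rwa [le_div_iff₀ (hM.trans_le hs)] at this
  exact tendsto_atTop_mono' _ (eventually_atTop.2 ⟨M, hlin⟩)
    (tendsto_id.const_mul_atTop (div_pos hFM hM))

lemma exists_le_of_AR {F f : ℝ → ℝ} {θ M : ℝ} (hF : ∀ s, HasDerivAt F (f s) s)
    (hθ : 1 ≤ θ) (hM : 0 < M) (hAR : ∀ t, M ≤ |t| → 0 < θ * F t ∧ θ * F t ≤ t * f t)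
    (B : ℝ) :
    ∃ R, ∀ s, R ≤ |s| → B ≤ F s := by
  have hAR' : ∀ t, M ≤ |t| → 0 < F t ∧ F t ≤ t * f t := fun t ht => by
    obtain ⟨h₁, h₂⟩ := hAR t ht
    have hF0 : 0 < F t := pos_of_mul_pos_right h₁ (by linarith)
    exact ⟨hF0, by nlinarith⟩
  have hM' : M ≤ |M| := le_abs_self M
  have hMneg : M ≤ |-M| := by rw [abs_neg]; exact hM'
  have htop : Tendsto F atTop atTop :=
    tendsto_atTop_of_le_mul_deriv hM hF (hAR' M hM').1 fun s hs =>
      (hAR' s (hs.trans (le_abs_self s))).2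
  have hbot : Tendsto (fun s => F (-s)) atTop atTop := by
    refine tendsto_atTop_of_le_mul_deriv (f := fun s => -f (-s)) hM
      (fun s => by simpa [Function.comp_def] using (hF (-s)).comp s (hasDerivAt_neg s))
      (hAR' (-M) hMneg).1 fun s hs => ?_
    have := (hAR' (-s) (by rw [abs_neg]; exact hs.trans (le_abs_self s))).2
    linarith
  obtain ⟨R₁, hR₁⟩ := eventually_atTop.1 (htop.eventually_ge_atTop B)
  obtain ⟨R₂, hR₂⟩ := eventually_atTop.1 (hbot.eventually_ge_atTop B)
  refine ⟨max R₁ R₂, fun s hs => ?_⟩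
  rcases le_total 0 s with h0 | h0
  · rw [abs_of_nonneg h0] at hs
    exact hR₁ s (le_of_max_le_left hs)
  · rw [abs_of_nonpos h0] at hs
    simpa using hR₂ (-s) (le_of_max_le_right hs)

lemma mul_sub_le_of_AR {θ θt δ K a b s t w : ℝ} (hθt : 0 ≤ θt) (hδ : 0 < δ)
    (hδθ : 2 * δ ≤ θ - θt) (hs : θ ≤ δ * |s|) (ha : θt * K ≤ δ * a) (ha0 : 0 < a)
    (hab : θ * a ≤ s * b) (hw : -K ≤ w) (hts : |t - s| ≤ 1) :
    θt * (a - w) ≤ t * b := by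
  have hθ : 0 < θ := by linarith
  have hsb : |s| * |b| = s * b := by
    rw [← abs_mul, abs_of_pos (by nlinarith)]
  have hshift : -|b| ≤ (t - s) * b := by
    refine (abs_le.1 ?_).1
    rw [abs_mul]
    exact mul_le_of_le_one_left (abs_nonneg b) hts
  have hb : θ * |b| ≤ δ * (s * b) := by
    rw [← hsb, ← mul_assoc]
    exact mul_le_mul_of_nonneg_right hs (abs_nonneg b)
  refine le_of_mul_le_mul_left ?_ hθ
  calc θ * (θt * (a - w)) ≤ θ * ((θ - δ) * a) := by
        refine mul_le_mul_of_nonneg_left ?_ hθ.le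
        nlinarith
    _ ≤ (θ - δ) * (s * b) := by nlinarith
    _ ≤ θ * (t * b) := by nlinarith

lemma exists_AR_shift {F f : ℝ → ℝ} {θ θt M : ℝ} (hF : ∀ s, HasDerivAt F (f s) s)
    (hθt : 0 ≤ θt) (hθ : θt < θ) (hθ1 : 1 ≤ θ) (hM : 0 < M)
    (hAR : ∀ t, M ≤ |t| → 0 < θ * F t ∧ θ * F t ≤ t * f t) :
    ∃ R, 0 < R ∧ ∀ t v, R ≤ |t| → |v| ≤ 1 →
      1 ≤ F (t - v) - F (-v) ∧ θt * (F (t - v) - F (-v)) ≤ t * f (t - v) := by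
  set δ := (θ - θt) / 2
  have hδ : 0 < δ := by simp only [δ]; linarith
  obtain ⟨K, hK⟩ := (isCompact_Icc (a := (-1 : ℝ)) (b := 1)).exists_bound_of_continuousOn
    (continuous_iff_continuousAt.2 fun s => (hF s).continuousAt).continuousOn
  obtain ⟨R₀, hR₀⟩ := exists_le_of_AR hF hθ1 hM hAR (max (K + 1) (θt * K / δ))
  refine ⟨max R₀ (max M (θ / δ)) + 1, by positivity, fun t v ht hv => ?_⟩
  have hs : max R₀ (max M (θ / δ)) ≤ |t - v| := by
    have := abs_sub_abs_le_abs_sub t v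
    linarith
  simp only [max_le_iff] at hs
  have hFs := hR₀ _ hs.1
  simp only [max_le_iff] at hFs
  have hFv : |F (-v)| ≤ K := by
    simpa using hK (-v) (by rw [mem_Icc]; constructor <;> linarith [abs_le.1 hv])
  obtain ⟨hpos, hARs⟩ := hAR _ hs.2.1
  refine ⟨by linarith [(abs_le.1 hFv).2], mul_sub_le_of_AR hθt hδ (by simp only [δ]; linarith)
    ((div_le_iff₀' hδ).1 hs.2.2) ((div_le_iff₀' hδ).1 hFs.2)
    (by linarith [abs_nonneg (F (-v))]) hARs (abs_le.1 hFv).1 (by simpa using hv)⟩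

lemma integral_rescale_mul_comp_sub (k f : ℝ → ℝ) {m : ℝ} (hm : 0 < m) (x : ℝ) :
    ∫ s, m * k (m * (x - s)) * f s = ∫ u, k u * f (x - u / m) := by
  rw [← integral_sub_left_eq_self _ volume x]
  simp only [sub_sub_cancel]
  have h := Measure.integral_comp_mul_left (fun u => k u * f (x - u / m)) m
  simp only [mul_div_cancel_left₀ _ hm.ne', abs_inv, abs_of_pos hm, smul_eq_mul] at h
  rw [← mul_inv_cancel_left₀ hm.ne' (∫ u, k u * f (x - u / m)), ← h, ← integral_const_mul]
  simp only [mul_assoc]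

lemma setIntegral_mul_eq_integral_of_support_subset {k : ℝ → ℝ} {S : Set ℝ}
    (hk : Function.support k ⊆ S) (g : ℝ → ℝ) : ∫ u in S, k u * g u = ∫ u, k u * g u :=
  setIntegral_eq_integral_of_forall_compl_eq_zero fun u hu => by
    rw [Function.notMem_support.1 fun h => hu (hk h), zero_mul]

lemma intervalIntegral_setIntegral_mul_comp_sub {k f F g : ℝ → ℝ} (hk : Continuous k)
    (hf : Continuous f) (hg : Continuous g) (hF : ∀ t, F t = ∫ s in 0..t, f s) {S : Set ℝ}
    (hS : IsCompact S) (t : ℝ) :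
    ∫ x in 0..t, ∫ u in S, k u * f (x - g u) = ∫ u in S, k u * (F (t - g u) - F (-g u)) := by
  rw [intervalIntegral_integral_swap]
  · congr 1 with u
    rw [intervalIntegral.integral_const_mul, intervalIntegral.integral_comp_sub_right, hF, hF,
      zero_sub, intervalIntegral.integral_interval_sub_left (hf.intervalIntegrable _ _)
        (hf.intervalIntegrable _ _)]
  · rw [Measure.prod_restrict, ← Measure.volume_eq_prod]
    exact (Continuous.continuousOn (by fun_prop)).integrableOn_compact (isCompact_uIcc.prod hS)
      |>.mono_set (prod_mono uIoc_subset_uIcc subset_rfl)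

lemma setIntegral_mul_le_mul {k g h : ℝ → ℝ} {a b : ℝ} (hk : Continuous k)
    (hk0 : ∀ u, 0 ≤ k u) (hg : Continuous g) (hh : Continuous h)
    (hgh : ∀ u ∈ Icc a b, g u ≤ h u) :
    ∫ u in Icc a b, k u * g u ≤ ∫ u in Icc a b, k u * h u :=
  setIntegral_mono_on (hk.mul hg).integrableOn_Icc (hk.mul hh).integrableOn_Icc measurableSet_Icc
    fun u hu => mul_le_mul_of_nonneg_left (hgh u hu) (hk0 u)

theorem exists_AR_mollify {k f F : ℝ → ℝ} {θ θt M : ℝ} (hk : Continuous k)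
    (hk0 : ∀ u, 0 ≤ k u) (hks : Function.support k ⊆ Icc (-1) 1) (hk1 : ∫ u, k u = 1)
    (hf : Continuous f) (hF : ∀ t, F t = ∫ s in 0..t, f s) (hθt : 0 < θt) (hθ : θt < θ)
    (hθ1 : 1 ≤ θ) (hM : 0 < M)
    (hAR : ∀ t, M ≤ |t| → 0 < θ * F t ∧ θ * F t ≤ t * f t) :
    ∃ R, 0 < R ∧ ∀ m : ℝ, 1 ≤ m → ∀ t, R < |t| →
      0 < θt * ∫ x in 0..t, ∫ u, k u * f (x - u / m) ∧
      θt * ∫ x in 0..t, ∫ u, k u * f (x - u / m) ≤ t * ∫ u, k u * f (t - u / m) := by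
  have hFd : ∀ t, HasDerivAt F (f t) t := fun t => by
    rw [show F = fun t => ∫ s in 0..t, f s from funext hF]
    exact (hf.integral_hasStrictDerivAt 0 t).hasDerivAt
  have hFc : Continuous F := continuous_iff_continuousAt.2 fun t => (hFd t).continuousAt
  obtain ⟨R, hR0, hR⟩ := exists_AR_shift hFd hθt.le hθ hθ1 hM hAR
  refine ⟨R, hR0, fun m hm t ht => ?_⟩
  have hshift : ∀ u ∈ Icc (-1 : ℝ) 1, |u / m| ≤ 1 := fun u hu => by
    rw [abs_div, abs_of_pos (by linarith : (0 : ℝ) < m), div_le_one (by linarith)]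
    exact (abs_le.2 hu).trans hm
  simp_rw [← setIntegral_mul_eq_integral_of_support_subset hks (fun u => f (_ - u / m))]
  rw [intervalIntegral_setIntegral_mul_comp_sub hk hf (by fun_prop) hF isCompact_Icc]
  constructor
  · refine mul_pos hθt (lt_of_lt_of_le one_pos ?_)
    calc (1 : ℝ) = ∫ u in Icc (-1) 1, k u * 1 := by
          rw [setIntegral_mul_eq_integral_of_support_subset hks (fun _ => 1)]
          simp only [mul_one, hk1]
      _ ≤ _ := setIntegral_mul_le_mul hk hk0 continuous_const (by fun_prop)
          fun u hu => (hR t _ ht.le (hshift u hu)).1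
  · rw [← integral_const_mul, ← integral_const_mul]
    simp_rw [mul_left_comm θt, mul_left_comm t]
    exact setIntegral_mul_le_mul hk hk0 (by fun_prop) (by fun_prop)
      fun u hu => (hR t _ ht.le (hshift u hu)).2

noncomputable def standardBump (t : ℝ) : ℝ := expNegInvGlue (1 - t ^ 2)

lemma standardBump_eq_ite (t : ℝ) :
    standardBump t = if |t| < 1 then Real.exp (1 / (t ^ 2 - 1)) else 0 := by
  have hsq : |t| < 1 ↔ 0 < 1 - t ^ 2 := by rw [sub_pos, sq_lt_one_iff_abs_lt_one]
  rw [standardBump, expNegInvGlue]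
  split_ifs with h₁ h₂ h₂
  · exact absurd (hsq.1 h₂) h₁.not_gt
  · rfl
  · rw [one_div, ← neg_sub, inv_neg, neg_neg]
  · exact absurd (hsq.2 (not_le.1 h₁)) h₂

lemma continuous_standardBump : Continuous standardBump :=
  (expNegInvGlue.contDiff (n := 0)).continuous.comp (by fun_prop)

lemma standardBump_nonneg (t : ℝ) : 0 ≤ standardBump t := expNegInvGlue.nonneg _

lemma support_standardBump_subset : Function.support standardBump ⊆ Icc (-1) 1 := fun t ht => by
  rw [Function.mem_support, standardBump, Ne, expNegInvGlue.zero_iff_nonpos, not_le, sub_pos,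
    sq_lt_one_iff_abs_lt_one] at ht
  exact abs_le.1 ht.le

lemma integral_standardBump_pos : 0 < ∫ t, standardBump t :=
  continuous_standardBump.integral_pos_of_hasCompactSupport_nonneg_nonzero
    (HasCompactSupport.intro' isCompact_Icc isClosed_Icc fun t ht =>
      Function.notMem_support.1 fun h => ht (support_standardBump_subset h))
    standardBump_nonneg (x := 0) (by simp [standardBump, expNegInvGlue.pos_of_pos one_pos |>.ne'])

theorem mollification_preserves_AR_condition_general
    (ρ : ℝ → ℝ)
    (hρ : ∀ t : ℝ, ρ t = if |t| < 1 then Real.exp (1 / (t ^ 2 - 1)) else 0)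
    (c : ℝ) (hc : c = (∫ t : ℝ, ρ t)⁻¹)
    (f : ℝ → ℝ) (hf : Continuous f)
    (θ M : ℝ) (hM : 0 < M)
    (F : ℝ → ℝ) (hF : ∀ t : ℝ, F t = ∫ s in (0:ℝ)..t, f s)
    (hAR : ∀ t : ℝ, M ≤ |t| → 0 < θ * F t ∧ θ * F t ≤ t * f t)
    (fm : ℕ → ℝ → ℝ)
    (hfm : ∀ (m : ℕ) (t : ℝ),
      fm m t = ∫ s : ℝ, (c * (m : ℝ) * ρ ((m : ℝ) * (t - s))) * f s)
    (Fm : ℕ → ℝ → ℝ)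
    (hFm : ∀ (m : ℕ) (t : ℝ), Fm m t = ∫ s in (0:ℝ)..t, fm m s) :
    ∀ θt : ℝ, 2 < θt → θt < θ →
      ∃ M₁ : ℝ, 0 < M₁ ∧ ∃ N₀ : ℕ, ∀ m : ℕ, N₀ ≤ m →
        ∀ t : ℝ, M₁ < |t| → 0 < θt * Fm m t ∧ θt * Fm m t ≤ t * fm m t := by
  intro θt hθt hθtθ
  obtain rfl : ρ = standardBump := funext fun t => (hρ t).trans (standardBump_eq_ite t).symm
  have hI := integral_standardBump_pos
  obtain ⟨R, hR0, hR⟩ := exists_AR_mollify (k := fun u => c * standardBump u)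
    (continuous_const.mul continuous_standardBump)
    (fun u => mul_nonneg (hc ▸ inv_nonneg.2 hI.le) (standardBump_nonneg u))
    (fun u hu => support_standardBump_subset (right_ne_zero_of_mul hu))
    (by rw [integral_const_mul, hc, inv_mul_cancel₀ hI.ne']) hf hF (by linarith) hθtθ
    (by linarith) hM hAR
  refine ⟨R, hR0, 1, fun m hm t ht => ?_⟩
  have hfm' : ∀ x, fm m x = ∫ u, c * standardBump u * f (x - u / m) := fun x => by
    rw [hfm, ← integral_rescale_mul_comp_sub _ _ (by exact_mod_cast hm : (0 : ℝ) < m)]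
    congr 1 with s
    ring
  simp_rw [hFm, hfm']
  exact hR m (by exact_mod_cast hm) t ht

/-- The Ambrosetti–Rabinowitz condition is preserved under mollification, with a
slightly smaller exponent `θ̃ ∈ (2, θ)`. -/
theorem mollification_preserves_AR_condition
    (ρ : ℝ → ℝ)
    (hρ : ∀ t : ℝ, ρ t = if |t| < 1 then Real.exp (1 / (t ^ 2 - 1)) else 0)
    (c : ℝ) (hc : c = (∫ t : ℝ, ρ t)⁻¹)
    (f : ℝ → ℝ) (hf : Continuous f)
    (θ M : ℝ) (hθ : 2 < θ) (hM : 0 < M)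
    (F : ℝ → ℝ) (hF : ∀ t : ℝ, F t = ∫ s in (0:ℝ)..t, f s)
    (hAR : ∀ t : ℝ, M ≤ |t| → 0 < θ * F t ∧ θ * F t ≤ t * f t)
    (fm : ℕ → ℝ → ℝ)
    (hfm : ∀ (m : ℕ) (t : ℝ),
      fm m t = ∫ s : ℝ, (c * (m : ℝ) * ρ ((m : ℝ) * (t - s))) * f s)
    (Fm : ℕ → ℝ → ℝ)
    (hFm : ∀ (m : ℕ) (t : ℝ), Fm m t = ∫ s in (0:ℝ)..t, fm m s) :
    ∀ θt : ℝ, 2 < θt → θt < θ →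
      ∃ M₁ : ℝ, 0 < M₁ ∧ ∃ N₀ : ℕ, ∀ m : ℕ, N₀ ≤ m →
        ∀ t : ℝ, M₁ < |t| → 0 < θt * Fm m t ∧ θt * Fm m t ≤ t * fm m t :=
  mollification_preserves_AR_condition_general ρ hρ c hc f hf θ M hM F hF hAR fm hfm Fm hFm
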